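/- arXiv:1708.08879 — 6 statements merged into one kernel-verified Lean document; each statement's English description precedes it below -/
import Mathlib

section
/- If φ_1,...,φ_n are unit vectors in a d-dimensional complex inner product space with n ≥ d, then max_{j≠j'} |⟨φ_j, φ_{j'}⟩|² ≥ (n-d)/(d(n-1)). -/
/-!
Write the Gram matrix of the `φ j` as `G = Aᴴ A` with `A` the `d × n` matrix of coordinates in an
orthonormal basis. The frame potential `∑ |⟨φ j, φ j'⟩|² = tr (G²) = tr ((A Aᴴ)²)` is at least
`(tr (A Aᴴ))² / d = (tr G)² / d = n² / d` by Cauchy–Schwarz on the diagonal of the `d × d` matrix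
`A Aᴴ`. The `n` diagonal terms contribute `n`, so the `n (n - 1)` off-diagonal terms have average
at least `(n² / d - n) / (n (n - 1)) = (n - d) / (d (n - 1))`.
-/

open Finset Matrix
open scoped InnerProductSpace

namespace Matrix

variable {m n 𝕜 : Type*} [Fintype m] [Fintype n] [RCLike 𝕜]

theorem trace_mul_conjTranspose_self_eq_sum_norm_sq (M : Matrix m n 𝕜) :
    (M * Mᴴ).trace = ∑ i, ∑ j, ((‖M i j‖ ^ 2 : ℝ) : 𝕜) := by
  simp [trace, mul_apply, RCLike.mul_conj]

theorem sum_norm_sq_conjTranspose_mul_self_eq (A : Matrix m n 𝕜) :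
    ∑ i, ∑ j, ‖(Aᴴ * A) i j‖ ^ 2 = ∑ i, ∑ j, ‖(A * Aᴴ) i j‖ ^ 2 := by
  have h : ((Aᴴ * A) * (Aᴴ * A)ᴴ).trace = ((A * Aᴴ) * (A * Aᴴ)ᴴ).trace := by
    simp only [conjTranspose_mul, conjTranspose_conjTranspose, ← Matrix.mul_assoc]
    rw [trace_mul_comm]
    simp only [Matrix.mul_assoc]
  simpa only [trace_mul_conjTranspose_self_eq_sum_norm_sq, ← RCLike.ofReal_sum,
    RCLike.ofReal_inj] using h

theorem norm_trace_sq_le_card_mul_sum_norm_sq (M : Matrix m m 𝕜) :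
    ‖M.trace‖ ^ 2 ≤ Fintype.card m * ∑ i, ∑ j, ‖M i j‖ ^ 2 :=
  calc ‖M.trace‖ ^ 2 ≤ (∑ i, ‖M i i‖) ^ 2 := by
        gcongr; exact norm_sum_le _ _
    _ ≤ Fintype.card m * ∑ i, ‖M i i‖ ^ 2 := sq_sum_le_card_mul_sum_sq
    _ ≤ Fintype.card m * ∑ i, ∑ j, ‖M i j‖ ^ 2 := by
        gcongr with i
        exact single_le_sum (f := fun j ↦ ‖M i j‖ ^ 2) (fun _ _ ↦ by positivity) (mem_univ i)

end Matrix

theorem sq_sum_norm_sq_le_finrank_mul_sum_norm_inner_sq {𝕜 E ι : Type*} [RCLike 𝕜]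
    [NormedAddCommGroup E] [InnerProductSpace 𝕜 E] [FiniteDimensional 𝕜 E] [Fintype ι]
    (φ : ι → E) :
    (∑ i, ‖φ i‖ ^ 2) ^ 2 ≤ Module.finrank 𝕜 E * ∑ i, ∑ j, ‖⟪φ i, φ j⟫_𝕜‖ ^ 2 := by
  set A := of fun i j ↦ (stdOrthonormalBasis 𝕜 E).repr (φ j) i
  have hgram : gram 𝕜 φ = Aᴴ * A := gram_eq_conjTranspose_mul _ φ
  have htrace : (gram 𝕜 φ).trace = ((∑ i, ‖φ i‖ ^ 2 : ℝ) : 𝕜) := by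
    simp [trace, inner_self_eq_norm_sq_to_K]
  calc (∑ i, ‖φ i‖ ^ 2) ^ 2 = ‖(A * Aᴴ).trace‖ ^ 2 := by
        rw [trace_mul_comm, ← hgram, htrace, RCLike.norm_ofReal,
          abs_of_nonneg (by positivity)]
    _ ≤ Module.finrank 𝕜 E * ∑ i, ∑ j, ‖(A * Aᴴ) i j‖ ^ 2 := by
        simpa using norm_trace_sq_le_card_mul_sum_norm_sq (A * Aᴴ)
    _ = Module.finrank 𝕜 E * ∑ i, ∑ j, ‖⟪φ i, φ j⟫_𝕜‖ ^ 2 := by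
        rw [← sum_norm_sq_conjTranspose_mul_self_eq, ← hgram]; rfl

theorem exists_ne_le_of_card_mul_add_sum_diag_le {ι : Type*} [Fintype ι] [Nontrivial ι]
    (f : ι → ι → ℝ) (c : ℝ)
    (h : Fintype.card ι * (Fintype.card ι - 1) * c + ∑ i, f i i ≤ ∑ i, ∑ j, f i j) :
    ∃ i j, i ≠ j ∧ c ≤ f i j := by
  classical
  by_contra! hlt
  have hrow (i : ι) : ∑ j, f i j < f i i + (Fintype.card ι - 1) * c := by
    rw [← add_sum_erase _ _ (mem_univ i)]
    have := sum_lt_sum_of_nonempty univ_nontrivial.erase_nonempty fun j hj ↦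
      hlt i j (ne_of_mem_erase hj).symm
    rw [sum_const, card_erase_of_mem (mem_univ i), card_univ, nsmul_eq_mul,
      Nat.cast_sub Fintype.card_pos] at this
    push_cast at this
    linarith
  have := sum_lt_sum_of_nonempty univ_nonempty fun i _ ↦ hrow i
  rw [sum_add_distrib, sum_const, card_univ, nsmul_eq_mul] at this
  linarith

theorem welch_bound_general {H : Type*} [NormedAddCommGroup H] [InnerProductSpace ℂ H]
    {d n : ℕ} (hd : 1 ≤ d) (hdim : Module.finrank ℂ H = d) (hn2 : 2 ≤ n)
    (φ : Fin n → H) (hunit : ∀ j, ‖φ j‖ = 1) :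
    ∃ j j', j ≠ j' ∧
      ((n : ℝ) - d) / (d * ((n : ℝ) - 1)) ≤ ‖(inner ℂ (φ j) (φ j') : ℂ)‖ ^ 2 := by
  have : FiniteDimensional ℂ H := FiniteDimensional.of_finrank_pos (by omega)
  have : Nontrivial (Fin n) := Fin.nontrivial_iff_two_le.mpr hn2
  have hframe : (n : ℝ) ^ 2 ≤ d * ∑ j, ∑ j', ‖⟪φ j, φ j'⟫_ℂ‖ ^ 2 := by
    simpa [hunit, hdim] using sq_sum_norm_sq_le_finrank_mul_sum_norm_inner_sq (𝕜 := ℂ) φ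
  have hdiag : ∑ j, ‖⟪φ j, φ j⟫_ℂ‖ ^ 2 = n := by
    simp [inner_self_eq_norm_sq_to_K, hunit]
  have hd' : (0 : ℝ) < d := by exact_mod_cast hd
  have hn' : (1 : ℝ) < n := by exact_mod_cast hn2
  refine exists_ne_le_of_card_mul_add_sum_diag_le (fun j j' ↦ ‖⟪φ j, φ j'⟫_ℂ‖ ^ 2) _ ?_
  rw [Fintype.card_fin, hdiag]
  calc (n : ℝ) * (n - 1) * ((n - d) / (d * (n - 1))) + n = n ^ 2 / d := by
        have : (n : ℝ) - 1 ≠ 0 := by linarith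
        field_simp; ring
    _ ≤ ∑ j, ∑ j', ‖⟪φ j, φ j'⟫_ℂ‖ ^ 2 := by
        rw [div_le_iff₀ hd']; linarith

/-- Welch bound: for `n ≥ d` unit vectors in a `d`-dimensional complex inner
product space, `max_{j≠j'} |⟨φ_j, φ_{j'}⟩|² ≥ (n-d)/(d(n-1))`. -/
theorem welch_bound {H : Type*} [NormedAddCommGroup H] [InnerProductSpace ℂ H]
    {d n : ℕ} (hd : 1 ≤ d) (hdim : Module.finrank ℂ H = d) (hn : d ≤ n) (hn2 : 2 ≤ n)
    (φ : Fin n → H) (hunit : ∀ j, ‖φ j‖ = 1) :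
    ∃ j j', j ≠ j' ∧
      ((n : ℝ) - d) / (d * ((n : ℝ) - 1)) ≤ ‖(inner ℂ (φ j) (φ j') : ℂ)‖ ^ 2 :=
  welch_bound_general hd hdim hn2 φ hunit
end

section
/- For any finite sequence of unit vectors φ_1,...,φ_n (n ≥ 2) in a real inner product space, max_{j≠j'} ⟨φ_j, φ_{j'}⟩ ≥ -1/(n-1). -/
/-!
Expanding `0 ≤ ‖∑ j, φ j‖ ^ 2` gives `n + ∑_{j ≠ j'} ⟪φ j, φ j'⟫ ≥ 0`, so the `n (n - 1)`
off-diagonal inner products have average at least `-1 / (n - 1)`, and one of them attains it.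
-/

open Finset

section

variable {ι H : Type*} [NormedAddCommGroup H] [InnerProductSpace ℝ H]

theorem norm_sum_sq_eq_sum_norm_sq_add_sum_offDiag_inner (s : Finset ι) (v : ι → H) :
    ‖∑ i ∈ s, v i‖ ^ 2 = ∑ i ∈ s, ‖v i‖ ^ 2 + ∑ p ∈ s.offDiag, inner ℝ (v p.1) (v p.2) := by
  classical
  rw [← real_inner_self_eq_norm_sq, sum_inner]
  simp_rw [inner_sum]
  rw [← sum_product' (f := fun i j => inner ℝ (v i) (v j)), ← diag_union_offDiag,
    sum_union (disjoint_diag_offDiag s), sum_diag]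
  simp_rw [real_inner_self_eq_norm_sq]

theorem neg_sum_norm_sq_le_sum_offDiag_inner (s : Finset ι) (v : ι → H) :
    -∑ i ∈ s, ‖v i‖ ^ 2 ≤ ∑ p ∈ s.offDiag, inner ℝ (v p.1) (v p.2) := by
  linarith [norm_sum_sq_eq_sum_norm_sq_add_sum_offDiag_inner s v, sq_nonneg ‖∑ i ∈ s, v i‖]

theorem exists_mem_offDiag_le_inner_of_norm_eq_one {s : Finset ι} (hs : 2 ≤ #s) {v : ι → H}
    (hv : ∀ i ∈ s, ‖v i‖ = 1) :
    ∃ p ∈ s.offDiag, -(1 / ((#s : ℝ) - 1)) ≤ inner ℝ (v p.1) (v p.2) := by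
  obtain ⟨a, ha, b, hb, hab⟩ := one_lt_card.1 hs
  refine exists_le_of_sum_le ⟨(a, b), mem_offDiag.2 ⟨ha, hb, hab⟩⟩ ?_
  have hs_sub_one : (#s : ℝ) - 1 ≠ 0 := by
    have : (2 : ℝ) ≤ #s := by exact_mod_cast hs
    linarith
  have hsum_const : ∑ _p ∈ s.offDiag, -(1 / ((#s : ℝ) - 1)) = -#s := by
    rw [sum_const, offDiag_card, nsmul_eq_mul, Nat.cast_sub (Nat.le_mul_self _), Nat.cast_mul]
    field_simp
  have hsum_norm_sq : ∑ i ∈ s, ‖v i‖ ^ 2 = #s := by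
    rw [sum_eq_card_nsmul fun i hi => by rw [hv i hi, one_pow], nsmul_one]
  rw [hsum_const, ← hsum_norm_sq]
  exact neg_sum_norm_sq_le_sum_offDiag_inner s v

end

/-- Rankin's simplex bound: for `n ≥ 2` unit vectors in a real inner product
space, `max_{j≠j'} ⟨φ_j, φ_{j'}⟩ ≥ -1/(n-1)`. -/
theorem rankin_simplex_bound {H : Type*} [NormedAddCommGroup H] [InnerProductSpace ℝ H]
    {n : ℕ} (hn : 2 ≤ n) (φ : Fin n → H) (hunit : ∀ j, ‖φ j‖ = 1) :
    ∃ j j', j ≠ j' ∧ -(1 / ((n : ℝ) - 1)) ≤ (inner ℝ (φ j) (φ j') : ℝ) := by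
  obtain ⟨⟨j, j'⟩, hjj', hle⟩ := exists_mem_offDiag_le_inner_of_norm_eq_one
    (s := univ) (by rwa [card_univ, Fintype.card_fin]) fun i _ => hunit i
  rw [card_univ, Fintype.card_fin] at hle
  exact ⟨j, j', (mem_offDiag.1 hjj').2.2, hle⟩
end

section
/- Let U_1,...,U_n be c-dimensional subspaces of ℂ^d with orthogonal projections P_1,...,P_n. Then max_{j≠j'} Tr(P_j P_{j'}) ≥ c(nc-d)/(d(n-1)). (Equivalently, the simplex bound: min_{j≠j'} (1/2)‖P_j - P_{j'}‖_F² ≤ (c(d-c)/d)·(n/(n-1)).) -/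
open Matrix

lemma trace_of_idem {d : ℕ} (A : Matrix (Fin d) (Fin d) ℂ) (h : A * A = A) :
    Matrix.trace A = (A.rank : ℂ) := by
  have hproj : LinearMap.IsProj (LinearMap.range A.mulVecLin) A.mulVecLin := by
    constructor
    · intro x; exact LinearMap.mem_range_self _ x
    · rintro x ⟨y, rfl⟩
      show A.mulVec (A.mulVec y) = A.mulVec y
      rw [Matrix.mulVec_mulVec, h]
  have ht := hproj.trace
  have h2 : LinearMap.trace ℂ (Fin d → ℂ) A.mulVecLin = Matrix.trace A := by
    rw [LinearMap.trace_eq_matrix_trace ℂ (Pi.basisFun ℂ (Fin d))]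
    congr 1
    ext i j
    simp [LinearMap.toMatrix_apply, Matrix.mulVecLin, Matrix.mulVec_single]
  rw [h2] at ht
  rw [ht, Matrix.rank]

/-- Simplex bound: for `n` rank-`c` orthogonal projections on `ℂ^d`,
`max_{j≠j'} Tr(P_j P_{j'}) ≥ c(nc-d)/(d(n-1))`. -/
theorem simplex_bound {d c n : ℕ} (hn : 2 ≤ n) (hc : 1 ≤ c) (hcd : c ≤ d)
    (P : Fin n → Matrix (Fin d) (Fin d) ℂ)
    (hherm : ∀ j, (P j).IsHermitian) (hidem : ∀ j, P j * P j = P j)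
    (hrank : ∀ j, (P j).rank = c) :
    ∃ j j', j ≠ j' ∧
      (c : ℝ) * ((n : ℝ) * c - d) / (d * ((n : ℝ) - 1))
        ≤ (Matrix.trace (P j * P j')).re := by
  have hd1 : 1 ≤ d := le_trans hc hcd
  have hdR : (0:ℝ) < d := by exact_mod_cast hd1
  have hnR : (1:ℝ) < n := by exact_mod_cast hn
  set S : Matrix (Fin d) (Fin d) ℂ := ∑ j, P j with hS
  have hSherm : S.IsHermitian := by
    show Sᴴ = S
    rw [hS, Matrix.conjTranspose_sum]
    exact Finset.sum_congr rfl fun j _ => (hherm j).eq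
  -- trace of each P j is c
  have htrP : ∀ j, Matrix.trace (P j) = (c : ℂ) := fun j => by
    rw [trace_of_idem (P j) (hidem j), hrank j]
  -- trace S = n c
  have htrS : Matrix.trace S = (n : ℂ) * c := by
    rw [hS, Matrix.trace_sum]
    simp [htrP]
  -- trace (S*S) decomposes
  have htrSS : Matrix.trace (S * S) = ∑ j, ∑ j', Matrix.trace (P j * P j') := by
    rw [hS, Finset.sum_mul_sum]
    rw [Matrix.trace_sum]
    exact Finset.sum_congr rfl fun j _ => Matrix.trace_sum _ _
  -- the Cauchy-Schwarz trace inequality for Hermitian S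
  have key : (Matrix.trace S).re ^ 2 ≤ (d : ℝ) * (Matrix.trace (S * S)).re := by
    have h1 : (Matrix.trace (S * S)).re = ∑ i, ∑ k, Complex.normSq (S i k) := by
      have : Matrix.trace (S * S) = ∑ i, ∑ k, S i k * S k i := by
        simp [Matrix.trace, Matrix.mul_apply, Matrix.diag]
      rw [this]
      rw [Complex.re_sum]
      refine Finset.sum_congr rfl fun i _ => ?_
      rw [Complex.re_sum]
      refine Finset.sum_congr rfl fun k _ => ?_
      have hki : S k i = starRingEnd ℂ (S i k) := by
        have := congrFun (congrFun hSherm.eq k) i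
        simpa [Matrix.conjTranspose_apply] using this.symm
      rw [hki, Complex.mul_conj]
      simp
    have h2 : ∑ i, (S i i).re ^ 2 ≤ ∑ i, ∑ k, Complex.normSq (S i k) := by
      refine Finset.sum_le_sum fun i _ => ?_
      calc (S i i).re ^ 2 ≤ Complex.normSq (S i i) := by
            rw [Complex.normSq_apply]; nlinarith [sq_nonneg (S i i).im]
        _ ≤ ∑ k, Complex.normSq (S i k) :=
            Finset.single_le_sum (fun k _ => Complex.normSq_nonneg _) (Finset.mem_univ i)
    have h3 : (Matrix.trace S).re = ∑ i, (S i i).re := by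
      simp [Matrix.trace, Matrix.diag, Complex.re_sum]
    have h4 : (∑ i, (S i i).re) ^ 2 ≤ (d : ℝ) * ∑ i, (S i i).re ^ 2 := by
      have := sq_sum_le_card_mul_sum_sq (s := (Finset.univ : Finset (Fin d)))
        (f := fun i => (S i i).re)
      simpa using this
    rw [h1, h3]
    nlinarith [h2, h4]
  -- numeric form
  have htrSre : (Matrix.trace S).re = (n : ℝ) * c := by
    rw [htrS]; simp
  -- sum decomposition over pairs
  set t : Fin n × Fin n → ℝ := fun p => (Matrix.trace (P p.1 * P p.2)).re with ht
  have hSSre : (Matrix.trace (S * S)).re = ∑ p ∈ Finset.univ ×ˢ Finset.univ, t p := by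
    rw [htrSS, Finset.sum_product]
    simp [ht, Complex.re_sum]
  have hdiagsum : ∑ p ∈ (Finset.univ : Finset (Fin n)).diag, t p = (n : ℝ) * c := by
    have : ∑ p ∈ (Finset.univ : Finset (Fin n)).diag, t p = ∑ j, t (j, j) := by
      refine Finset.sum_nbij' (fun p => p.1) (fun j => (j, j)) ?_ ?_ ?_ ?_ ?_
      · intro p hp; simp
      · intro j hj; simp
      · intro p hp; simp at hp; ext <;> simp [hp.symm]
      · intro j hj; rfl
      · rintro ⟨a, b⟩ hp
        simp only [Finset.mem_diag] at hp
        rw [hp.2]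
    rw [this]
    have : ∀ j : Fin n, t (j, j) = (c : ℝ) := fun j => by
      simp only [ht]; rw [hidem j, htrP j]; simp
    simp [this]
  have hsplit : ∑ p ∈ Finset.univ ×ˢ Finset.univ, t p =
      ∑ p ∈ (Finset.univ : Finset (Fin n)).diag, t p +
      ∑ p ∈ (Finset.univ : Finset (Fin n)).offDiag, t p := by
    rw [← Finset.diag_union_offDiag, Finset.sum_union (Finset.disjoint_diag_offDiag _)]
  have hoffsum : ((n : ℝ) * c) ^ 2 / d - n * c ≤
      ∑ p ∈ (Finset.univ : Finset (Fin n)).offDiag, t p := by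
    have h5 : ((n:ℝ) * c) ^ 2 ≤ d * (Matrix.trace (S * S)).re := by
      rw [← htrSre]; exact key
    have h6 : (Matrix.trace (S * S)).re =
        (n : ℝ) * c + ∑ p ∈ (Finset.univ : Finset (Fin n)).offDiag, t p := by
      rw [hSSre, hsplit, hdiagsum]
    rw [h6] at h5
    rw [sub_le_iff_le_add, div_le_iff₀ hdR]
    nlinarith [h5]
  -- pigeonhole
  set B : ℝ := (c : ℝ) * ((n : ℝ) * c - d) / (d * ((n : ℝ) - 1)) with hB
  have hcard : ((Finset.univ : Finset (Fin n)).offDiag.card : ℝ) = n * (n - 1) := by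
    rw [Finset.offDiag_card]
    simp only [Finset.card_univ, Fintype.card_fin]
    have h2n : 1 ≤ n := le_of_lt hn
    push_cast [Nat.cast_sub (Nat.le_mul_of_pos_left n (by omega) : n ≤ n * n)]
    ring
  have hne : (Finset.univ : Finset (Fin n)).offDiag.Nonempty := by
    refine ⟨(⟨0, by omega⟩, ⟨1, by omega⟩), ?_⟩
    simp [Finset.mem_offDiag]
  have hconst : ∑ _p ∈ (Finset.univ : Finset (Fin n)).offDiag, B ≤
      ∑ p ∈ (Finset.univ : Finset (Fin n)).offDiag, t p := by
    rw [Finset.sum_const, nsmul_eq_mul, hcard]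
    have hn1 : (n : ℝ) - 1 ≠ 0 := by nlinarith
    have hd0 : (d : ℝ) ≠ 0 := ne_of_gt hdR
    have heq : (n:ℝ) * (n - 1) * B = ((n : ℝ) * c) ^ 2 / d - n * c := by
      rw [hB]
      field_simp
    rw [heq]
    exact hoffsum
  obtain ⟨p, hp, hle⟩ := Finset.exists_le_of_sum_le hne hconst
  rw [Finset.mem_offDiag] at hp
  exact ⟨p.1, p.2, hp.2.2, hle⟩
end

section
/- Let U_1,...,U_n be c-dimensional subspaces of ℂ^d with orthogonal projections P_1,...,P_n. Then max_{j≠j'} Tr(P_j P_{j'}) = c(nc-d)/(d(n-1)) if and only if both: (i) Σ_j P_j = (nc/d)I (tight fusion frame), and (ii) Tr(P_j P_{j'}) is constant over all j ≠ j' (equi-chordal). -/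
open Matrix Finset
open scoped ComplexOrder

/-!
Put `S = ∑ j, P j` and `α = n c / d`; idempotence gives `Tr P_j = rank P_j = c`, so `Tr S = α d`
and `Tr (P_j P_j) = c`. Expanding `Tr (S²)` as a double sum,
`∑_{j ≠ j'} Tr (P_j P_j') = Tr (S²) - n c = ‖S - α I‖²_F + n (n - 1) B`,
where `B` is the simplex bound and `‖S - α I‖²_F = Tr ((S - α I)²)` as `S` is Hermitian. So the average off-diagonal trace exceeds `B` by a multiple of
`‖S - α I‖²_F ≥ 0`, and the maximum equals `B` exactly when this excess vanishes (`S = α I`) and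
all off-diagonal traces equal their average.
-/

theorem Finset.sup'_eq_iff_of_sum_eq {ι : Type*} {F : Finset ι} (hF : F.Nonempty) {f : ι → ℝ}
    {B r : ℝ} (hr : 0 ≤ r) (hsum : ∑ p ∈ F, f p = #F * B + r) :
    F.sup' hF f = B ↔ r = 0 ∧ ∃ β, ∀ p ∈ F, f p = β := by
  constructor
  · intro hmax
    have hle : ∀ p ∈ F, f p ≤ B := fun p hp => hmax ▸ F.le_sup' f hp
    have hsum_le : ∑ p ∈ F, f p ≤ ∑ _p ∈ F, B := sum_le_sum hle
    rw [sum_const, nsmul_eq_mul] at hsum_le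
    have hr0 : r = 0 := by linarith
    refine ⟨hr0, B, (sum_eq_sum_iff_of_le hle).1 ?_⟩
    rw [hsum, hr0, sum_const, nsmul_eq_mul, add_zero]
  · rintro ⟨rfl, β, hβ⟩
    have hβB : β = B := by
      rw [sum_congr rfl hβ, sum_const, nsmul_eq_mul, add_zero] at hsum
      exact mul_left_cancel₀ (Nat.cast_ne_zero.2 hF.card_pos.ne') hsum
    rw [sup'_congr hF rfl fun p hp => (hβ p hp).trans hβB, sup'_const]

namespace Matrix

variable {ι : Type*} [Fintype ι]

theorem trace_eq_rank_of_isIdempotentElem [DecidableEq ι] {K : Type*} [Field K] {A : Matrix ι ι K}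
    (hA : IsIdempotentElem A) : A.trace = A.rank := by
  have hA' : IsIdempotentElem (toLin' A) := hA.map toLinAlgEquiv'
  rw [← trace_toLin'_eq, (LinearMap.IsIdempotentElem.isProj_range _ hA').trace]
  rfl

section RCLike

variable {𝕜 : Type*} [RCLike 𝕜] {T : Matrix ι ι 𝕜}

theorem IsHermitian.trace_mul_self_nonneg (hT : T.IsHermitian) : 0 ≤ (T * T).trace := by
  simpa only [hT.eq] using (posSemidef_conjTranspose_mul_self T).trace_nonneg

theorem IsHermitian.re_trace_mul_self_nonneg (hT : T.IsHermitian) :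
    0 ≤ RCLike.re (T * T).trace :=
  (RCLike.nonneg_iff.1 hT.trace_mul_self_nonneg).1

theorem IsHermitian.re_trace_mul_self_eq_zero_iff (hT : T.IsHermitian) :
    RCLike.re (T * T).trace = 0 ↔ T = 0 := by
  rw [← trace_conjTranspose_mul_self_eq_zero_iff, hT.eq, RCLike.ext_iff (K := 𝕜) (w := 0),
    (RCLike.nonneg_iff.1 hT.trace_mul_self_nonneg).2, map_zero, map_zero, eq_self, and_true]

end RCLike

theorem trace_sub_smul_one_mul_self [DecidableEq ι] {K : Type*} [Field K] (S : Matrix ι ι K) :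
    ((S - (S.trace / Fintype.card ι) • 1) * (S - (S.trace / Fintype.card ι) • 1)).trace
      = (S * S).trace - S.trace ^ 2 / Fintype.card ι := by
  simp only [sub_mul, mul_sub, smul_mul_assoc, mul_smul_comm, one_mul, mul_one,
    trace_sub, trace_smul, trace_one, smul_eq_mul]
  rcases eq_or_ne (Fintype.card ι : K) 0 with h | h
  · simp [h]
  · field_simp
    ring

theorem trace_sum_mul_sum_eq_add_sum_offDiag {R κ : Type*} [Ring R] [Fintype κ] [DecidableEq κ]
    (P : κ → Matrix ι ι R) :
    ((∑ j, P j) * ∑ j, P j).trace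
      = ∑ j, (P j * P j).trace + ∑ p ∈ univ.offDiag, (P p.1 * P p.2).trace := by
  simp_rw [sum_mul_sum, trace_sum]
  rw [← sum_product', ← diag_union_offDiag,
    sum_union (disjoint_diag_offDiag _), sum_diag]

theorem sum_offDiag_trace_mul_of_isIdempotentElem [DecidableEq ι] {κ K : Type*} [Fintype κ]
    [DecidableEq κ] [Field K] {P : κ → Matrix ι ι K} {c : K}
    (hidem : ∀ j, IsIdempotentElem (P j)) (htrace : ∀ j, (P j).trace = c) :
    ∑ p ∈ univ.offDiag, (P p.1 * P p.2).trace
      = ((∑ j, P j - (Fintype.card κ * c / Fintype.card ι) • 1) *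
          (∑ j, P j - (Fintype.card κ * c / Fintype.card ι) • 1)).trace
        + (Fintype.card κ * c) ^ 2 / Fintype.card ι - Fintype.card κ * c := by
  have hS : (∑ j, P j).trace = Fintype.card κ * c := by simp [trace_sum, htrace]
  rw [← hS, trace_sub_smul_one_mul_self, trace_sum_mul_sum_eq_add_sum_offDiag]
  simp only [(hidem _).eq, htrace, sum_const, card_univ, nsmul_eq_mul, hS]
  ring

end Matrix

/-- Equality in the simplex bound holds iff the subspaces form an equi-chordal
tight fusion frame: `max_{j≠j'} Tr(P_j P_{j'}) = c(nc-d)/(d(n-1))` iff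
`Σ_j P_j = (nc/d)I` and `Tr(P_j P_{j'})` is constant over `j ≠ j'`. -/
theorem simplex_bound_equality {d c n : ℕ} (hn : 2 ≤ n) (hc : 1 ≤ c) (hcd : c ≤ d)
    (P : Fin n → Matrix (Fin d) (Fin d) ℂ)
    (hherm : ∀ j, (P j).IsHermitian) (hidem : ∀ j, P j * P j = P j)
    (hrank : ∀ j, (P j).rank = c)
    (hne : (Finset.univ.filter (fun p : Fin n × Fin n => p.1 ≠ p.2)).Nonempty) :
    (Finset.univ.filter (fun p : Fin n × Fin n => p.1 ≠ p.2)).sup' hne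
        (fun p => (Matrix.trace (P p.1 * P p.2)).re)
      = (c : ℝ) * ((n : ℝ) * c - d) / (d * ((n : ℝ) - 1))
    ↔ ((∑ j, P j = (((n : ℂ) * c) / d) • 1) ∧
        (∃ β : ℝ, ∀ j j', j ≠ j' → (Matrix.trace (P j * P j')).re = β)) := by
  set F := univ.filter (fun p : Fin n × Fin n => p.1 ≠ p.2)
  set B : ℝ := c * (n * c - d) / (d * (n - 1)) with hB
  set T := ∑ j, P j - (((n : ℂ) * c) / d) • 1
  have hT : T.IsHermitian :=
    IsHermitian.sub (isSelfAdjoint_sum univ fun j _ => hherm j) (by simp [IsHermitian])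
  have htrace : ∀ j, (P j).trace = c := fun j => by
    rw [trace_eq_rank_of_isIdempotentElem (hidem j), hrank j]
  have hF : F = univ.offDiag := by
    ext
    simp [F]
  have hcardB : (#F : ℝ) * B = (n * c) ^ 2 / d - n * c := by
    have hd : (d : ℝ) ≠ 0 := Nat.cast_ne_zero.2 (by omega)
    have hn1 : (n : ℝ) - 1 ≠ 0 := sub_ne_zero.2 (Nat.cast_ne_one.2 (by omega))
    rw [hB, hF, offDiag_card, card_univ, Fintype.card_fin, Nat.cast_sub (Nat.le_mul_self n)]
    push_cast
    field_simp
  have hsum : ∑ p ∈ F, (P p.1 * P p.2).trace.re = #F * B + (T * T).trace.re := by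
    rw [hcardB, hF, ← Complex.re_sum, sum_offDiag_trace_mul_of_isIdempotentElem hidem htrace,
      Fintype.card_fin, Fintype.card_fin]
    simp only [pow_two, Complex.sub_re, Complex.add_re, Complex.div_natCast_re, Complex.mul_re,
      Complex.natCast_re, Complex.natCast_im, mul_zero, sub_zero, Complex.mul_im, zero_mul,
      add_zero]
    ring
  have hr : (T * T).trace.re = 0 ↔ T = 0 := hT.re_trace_mul_self_eq_zero_iff
  rw [sup'_eq_iff_of_sum_eq (r := (T * T).trace.re) hne hT.re_trace_mul_self_nonneg hsum, hr,
    sub_eq_zero]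
  simp [F]
end

section
/- Let Φ_1,...,Φ_n be d×c complex matrices with Φ_j*Φ_j = I for each j. Then max_{j≠j'} ‖Φ_j*Φ_{j'}‖₂² ≥ (nc-d)/(d(n-1)). -/
/-!
Let `S = ∑ⱼ Φⱼ Φⱼᴴ` be the frame operator, a `d × d` matrix. Its trace is `n c`, and its squared
Frobenius norm is `∑_{j,j'} ‖Φⱼᴴ Φ_{j'}‖_F²`, whose `n` diagonal terms equal `c` and whose
off-diagonal terms are at most `c` times the squared operator norm. Cauchy–Schwarz for the trace,
`|tr S|² ≤ d ‖S‖_F²`, then gives `(n c)² ≤ d n c (1 + (n - 1) μ)` for the largest off-diagonal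
`μ = ‖Φⱼᴴ Φ_{j'}‖₂²`, which rearranges to the bound.
-/

open Matrix

namespace Matrix

open scoped Matrix.Norms.Frobenius

variable {ι m n α 𝕜 : Type*} [Fintype ι] [Fintype m] [Fintype n] [RCLike 𝕜]

theorem frobenius_norm_sq_eq_sum [SeminormedAddCommGroup α] (A : Matrix m n α) :
    ‖A‖ ^ 2 = ∑ i, ∑ j, ‖A i j‖ ^ 2 := by
  rw [frobenius_norm_def, ← Real.sqrt_eq_rpow, Real.sq_sqrt (by positivity)]
  simp_rw [Real.rpow_two]

theorem frobenius_norm_one_sq [DecidableEq n] : ‖(1 : Matrix n n 𝕜)‖ ^ 2 = Fintype.card n := by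
  simp [frobenius_norm_sq_eq_sum, one_apply, apply_ite]

theorem re_trace_mul_conjTranspose_self (A : Matrix m n 𝕜) :
    RCLike.re (A * Aᴴ).trace = ‖A‖ ^ 2 := by
  simp [frobenius_norm_sq_eq_sum, trace, mul_apply, RCLike.mul_conj]

theorem norm_trace_sq_le_card_mul_frobenius_norm_sq [SeminormedAddCommGroup α]
    (A : Matrix n n α) : ‖A.trace‖ ^ 2 ≤ Fintype.card n * ‖A‖ ^ 2 := by
  calc ‖A.trace‖ ^ 2 ≤ (∑ i, ‖A i i‖) ^ 2 := by gcongr; exact norm_sum_le _ _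
    _ ≤ Fintype.card n * ∑ i, ‖A i i‖ ^ 2 := sq_sum_le_card_mul_sum_sq
    _ ≤ Fintype.card n * ‖A‖ ^ 2 := by
      rw [frobenius_norm_sq_eq_sum]
      gcongr with i
      exact Finset.single_le_sum (f := fun j ↦ ‖A i j‖ ^ 2) (fun _ _ ↦ by positivity)
        (Finset.mem_univ i)

theorem sum_norm_sq_col_le_opNorm_sq [DecidableEq n] (A : Matrix n n 𝕜) (j : n) :
    ∑ i, ‖A i j‖ ^ 2 ≤ ‖toEuclideanCLM (𝕜 := 𝕜) A‖ ^ 2 := by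
  have hcol : ‖toEuclideanCLM (𝕜 := 𝕜) A (EuclideanSpace.single j 1)‖ ^ 2 = ∑ i, ‖A i j‖ ^ 2 := by
    simp [EuclideanSpace.norm_sq_eq]
  rw [← hcol]
  gcongr
  simpa using (toEuclideanCLM (𝕜 := 𝕜) A).le_opNorm (EuclideanSpace.single j 1)

theorem frobenius_norm_sq_le_card_mul_opNorm_sq [DecidableEq n] (A : Matrix n n 𝕜) :
    ‖A‖ ^ 2 ≤ Fintype.card n * ‖toEuclideanCLM (𝕜 := 𝕜) A‖ ^ 2 := by
  rw [frobenius_norm_sq_eq_sum, Finset.sum_comm, ← nsmul_eq_mul, ← Finset.card_univ]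
  exact Finset.sum_le_card_nsmul _ _ _ fun j _ ↦ sum_norm_sq_col_le_opNorm_sq A j

theorem frobenius_norm_sq_sum_mul_conjTranspose (Φ : ι → Matrix m n 𝕜) :
    ‖∑ i, Φ i * (Φ i)ᴴ‖ ^ 2 = ∑ i, ∑ j, ‖(Φ i)ᴴ * Φ j‖ ^ 2 := by
  simp_rw [← re_trace_mul_conjTranspose_self, conjTranspose_sum, conjTranspose_mul,
    conjTranspose_conjTranspose, Finset.sum_mul_sum, trace_sum, map_sum]
  refine Finset.sum_congr rfl fun i _ ↦ Finset.sum_congr rfl fun j _ ↦ ?_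
  rw [Matrix.mul_assoc, trace_mul_comm, Matrix.mul_assoc, Matrix.mul_assoc, Matrix.mul_assoc]

theorem trace_sum_mul_conjTranspose_of_isometry [DecidableEq n] (Φ : ι → Matrix m n 𝕜)
    (hΦ : ∀ i, (Φ i)ᴴ * Φ i = 1) :
    (∑ i, Φ i * (Φ i)ᴴ).trace = Fintype.card ι * Fintype.card n := by
  simp [trace_sum, trace_mul_comm (Φ _), hΦ]

theorem sq_card_mul_card_le_of_isometry [DecidableEq n] (Φ : ι → Matrix m n 𝕜)
    (hΦ : ∀ i, (Φ i)ᴴ * Φ i = 1) :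
    ((Fintype.card ι : ℝ) * Fintype.card n) ^ 2 ≤
      Fintype.card m * ∑ i, ∑ j, ‖(Φ i)ᴴ * Φ j‖ ^ 2 := by
  have h := norm_trace_sq_le_card_mul_frobenius_norm_sq (∑ i, Φ i * (Φ i)ᴴ)
  rwa [trace_sum_mul_conjTranspose_of_isometry Φ hΦ, frobenius_norm_sq_sum_mul_conjTranspose,
    ← Nat.cast_mul, RCLike.norm_natCast, Nat.cast_mul] at h

theorem sq_card_mul_card_le_of_isometry_of_opNorm_le [DecidableEq ι] [DecidableEq n]
    (Φ : ι → Matrix m n 𝕜) (hΦ : ∀ i, (Φ i)ᴴ * Φ i = 1) {μ : ℝ}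
    (hμ : ∀ i j, i ≠ j → ‖toEuclideanCLM (𝕜 := 𝕜) ((Φ i)ᴴ * Φ j)‖ ^ 2 ≤ μ) :
    ((Fintype.card ι : ℝ) * Fintype.card n) ^ 2 ≤
      Fintype.card m * (Fintype.card ι * Fintype.card n * (1 + (Fintype.card ι - 1) * μ)) := by
  have hrow : ∀ i, ∑ j, ‖(Φ i)ᴴ * Φ j‖ ^ 2 ≤
      Fintype.card n * (1 + (Fintype.card ι - 1) * μ) := by
    intro i
    have hoff : ∑ j ∈ Finset.univ.erase i, ‖(Φ i)ᴴ * Φ j‖ ^ 2 ≤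
        (Fintype.card ι - 1 : ℝ) * (Fintype.card n * μ) := by
      calc _ ≤ ∑ j ∈ Finset.univ.erase i, (Fintype.card n * μ : ℝ) := by
            refine Finset.sum_le_sum fun j hj ↦
              (frobenius_norm_sq_le_card_mul_opNorm_sq _).trans ?_
            gcongr
            exact hμ i j (Finset.ne_of_mem_erase hj).symm
        _ = _ := by
            rw [Finset.sum_const, Finset.card_erase_of_mem (Finset.mem_univ i), Finset.card_univ,
              nsmul_eq_mul, Nat.cast_pred (Fintype.card_pos_iff.2 ⟨i⟩)]
    rw [← Finset.add_sum_erase _ _ (Finset.mem_univ i), hΦ, frobenius_norm_one_sq]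
    linarith
  calc _ ≤ Fintype.card m * ∑ i, ∑ j, ‖(Φ i)ᴴ * Φ j‖ ^ 2 := sq_card_mul_card_le_of_isometry Φ hΦ
    _ ≤ _ := by
      gcongr
      refine (Finset.sum_le_card_nsmul _ _ _ fun i _ ↦ hrow i).trans_eq ?_
      simp only [Finset.card_univ, nsmul_eq_mul]; ring

end Matrix

theorem spectral_welch_bound_general {d c n : ℕ} (hn : 2 ≤ n)
    (Φ : Fin n → Matrix (Fin d) (Fin c) ℂ) (hiso : ∀ j, (Φ j)ᴴ * Φ j = 1) :
    ∃ j j', j ≠ j' ∧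
      ((n : ℝ) * c - d) / (d * ((n : ℝ) - 1))
        ≤ ‖Matrix.toEuclideanCLM (𝕜 := ℂ) ((Φ j)ᴴ * Φ j')‖ ^ 2 := by
  have hpairs : (Finset.univ.offDiag : Finset (Fin n × Fin n)).Nonempty :=
    ⟨(⟨0, by omega⟩, ⟨1, by omega⟩), by simp [Fin.ext_iff]⟩
  obtain ⟨⟨j, j'⟩, hjj', hmax⟩ := Finset.univ.offDiag.exists_max_image
    (fun p : Fin n × Fin n ↦ ‖toEuclideanCLM (𝕜 := ℂ) ((Φ p.1)ᴴ * Φ p.2)‖ ^ 2) hpairs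
  refine ⟨j, j', (Finset.mem_offDiag.1 hjj').2.2, ?_⟩
  set μ := ‖toEuclideanCLM (𝕜 := ℂ) ((Φ j)ᴴ * Φ j')‖ ^ 2
  have hwelch := sq_card_mul_card_le_of_isometry_of_opNorm_le Φ hiso
    fun i i' hii' ↦ hmax (i, i') (by simpa using hii')
  simp only [Fintype.card_fin] at hwelch
  have hn1 : (1 : ℝ) ≤ n := by exact_mod_cast (by omega : 1 ≤ n)
  have hμ : 0 ≤ μ := by positivity
  have hdn : (0 : ℝ) ≤ d * (n - 1) := mul_nonneg d.cast_nonneg (by linarith)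
  have hrearranged : (n : ℝ) * c - d ≤ μ * (d * (n - 1)) := by
    rcases (Nat.cast_nonneg c : (0 : ℝ) ≤ c).eq_or_lt with hc | hc
    · rw [← hc, mul_zero, zero_sub]
      linarith [mul_nonneg hμ hdn, d.cast_nonneg (α := ℝ)]
    · have : 0 < (n : ℝ) * c := by positivity
      nlinarith
  exact div_le_of_le_mul₀ hdn hμ hrearranged

/-- Spectral-norm Welch bound: for `d×c` isometries `Φ_j`,
`max_{j≠j'} ‖Φ_j*Φ_{j'}‖₂² ≥ (nc-d)/(d(n-1))`. -/
theorem spectral_welch_bound {d c n : ℕ} (hn : 2 ≤ n) (hc : 1 ≤ c) (hcd : c ≤ d)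
    (Φ : Fin n → Matrix (Fin d) (Fin c) ℂ) (hiso : ∀ j, (Φ j)ᴴ * Φ j = 1) :
    ∃ j j', j ≠ j' ∧
      ((n : ℝ) * c - d) / (d * ((n : ℝ) - 1))
        ≤ ‖Matrix.toEuclideanCLM (𝕜 := ℂ) ((Φ j)ᴴ * Φ j')‖ ^ 2 :=
  spectral_welch_bound_general hn Φ hiso
end

section
/- Let Φ_1,...,Φ_n be d×c complex matrices with orthonormal columns, let Φ = [Φ_1 ... Φ_n] be their d×nc concatenation, and suppose n c > d. Then ‖ΦΦ* - (nc/d)I‖_F² = Σ_{j≠j'} ‖Φ_j*Φ_{j'}‖_F² + nc - n²c²/d ≥ 0, with equality Σ_{j≠j'}‖Φ_j*Φ_{j'}‖_F² = n²c²/d - nc if and only if ΦΦ* = (nc/d)I. -/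
open Matrix

lemma trace_AhA_re {m k : Type*} [Fintype m] [Fintype k] (A : Matrix m k ℂ) :
    (Matrix.trace (Aᴴ * A)).re = ∑ j, ∑ i, Complex.normSq (A i j) := by
  simp only [Matrix.trace, Matrix.diag, Matrix.mul_apply, Matrix.conjTranspose_apply,
    Complex.re_sum]
  congr 1; ext j; congr 1; ext i
  simp [Complex.normSq_apply, Complex.mul_re, Complex.star_def, mul_comm]

lemma trace_AhA_nonneg {m k : Type*} [Fintype m] [Fintype k] (A : Matrix m k ℂ) :
    0 ≤ (Matrix.trace (Aᴴ * A)).re := by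
  rw [trace_AhA_re]
  exact Finset.sum_nonneg fun j _ => Finset.sum_nonneg fun i _ => Complex.normSq_nonneg _

lemma trace_AhA_eq_zero_iff {m k : Type*} [Fintype m] [Fintype k] (A : Matrix m k ℂ) :
    (Matrix.trace (Aᴴ * A)).re = 0 ↔ A = 0 := by
  rw [trace_AhA_re]
  constructor
  · intro h
    ext i j
    have h1 := (Finset.sum_eq_zero_iff_of_nonneg
      (fun j _ => Finset.sum_nonneg fun i _ => Complex.normSq_nonneg _)).mp h j (by simp)
    have h2 := (Finset.sum_eq_zero_iff_of_nonneg
      (fun i _ => Complex.normSq_nonneg _)).mp h1 i (by simp)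
    simpa using (Complex.normSq_eq_zero.mp h2)
  · intro h; simp [h]

/-- With `Φ` the `d × nc` concatenation of the isometries `Φ_j`,
`‖ΦΦ* - (nc/d)I‖_F² = Σ_{j≠j'} ‖Φ_j*Φ_{j'}‖_F² + nc - n²c²/d ≥ 0`,
with equality `Σ_{j≠j'} ‖Φ_j*Φ_{j'}‖_F² = n²c²/d - nc` iff `ΦΦ* = (nc/d)I`. -/
theorem fusion_gram_identity {d c n : ℕ} (hn : 2 ≤ n) (hc : 1 ≤ c) (hcd : c ≤ d)
    (hnc : d < n * c)
    (Φs : Fin n → Matrix (Fin d) (Fin c) ℂ) (hiso : ∀ j, (Φs j)ᴴ * Φs j = 1)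
    (Φ : Matrix (Fin d) (Fin n × Fin c) ℂ)
    (hΦ : Φ = Matrix.of (fun i p => Φs p.1 i p.2)) :
    (Matrix.trace ((Φ * Φᴴ - (((n : ℂ) * c) / d) • 1)ᴴ
          * (Φ * Φᴴ - (((n : ℂ) * c) / d) • 1))).re
        = (∑ p ∈ Finset.univ.filter (fun p : Fin n × Fin n => p.1 ≠ p.2),
            (Matrix.trace (((Φs p.1)ᴴ * Φs p.2)ᴴ * ((Φs p.1)ᴴ * Φs p.2))).re)
          + (n : ℝ) * c - (n : ℝ) ^ 2 * c ^ 2 / d ∧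
    (0 : ℝ) ≤ (∑ p ∈ Finset.univ.filter (fun p : Fin n × Fin n => p.1 ≠ p.2),
            (Matrix.trace (((Φs p.1)ᴴ * Φs p.2)ᴴ * ((Φs p.1)ᴴ * Φs p.2))).re)
          + (n : ℝ) * c - (n : ℝ) ^ 2 * c ^ 2 / d ∧
    ((∑ p ∈ Finset.univ.filter (fun p : Fin n × Fin n => p.1 ≠ p.2),
            (Matrix.trace (((Φs p.1)ᴴ * Φs p.2)ᴴ * ((Φs p.1)ᴴ * Φs p.2))).re)
        = (n : ℝ) ^ 2 * c ^ 2 / d - (n : ℝ) * c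
      ↔ Φ * Φᴴ = (((n : ℂ) * c) / d) • 1) := by
  have hd0 : (d : ℂ) ≠ 0 := Nat.cast_ne_zero.mpr (by omega)
  have hd0' : (d : ℝ) ≠ 0 := Nat.cast_ne_zero.mpr (by omega)
  set f : Fin n × Fin n → ℂ :=
    fun p => Matrix.trace (((Φs p.1)ᴴ * Φs p.2)ᴴ * ((Φs p.1)ᴴ * Φs p.2)) with hf
  have hsum : Φ * Φᴴ = ∑ j, Φs j * (Φs j)ᴴ := by
    ext i k
    simp [hΦ, Matrix.mul_apply, Matrix.conjTranspose_apply, Matrix.sum_apply,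
      Fintype.sum_prod_type]
  have h1 : Matrix.trace (Φ * Φᴴ) = (n : ℂ) * c := by
    rw [hsum, Matrix.trace_sum]
    have : ∀ j : Fin n, Matrix.trace (Φs j * (Φs j)ᴴ) = (c : ℂ) := by
      intro j
      rw [Matrix.trace_mul_comm, hiso, Matrix.trace_one]
      simp
    simp only [this, Finset.sum_const, Finset.card_univ, Fintype.card_fin, nsmul_eq_mul]
  have hterm : ∀ j j' : Fin n, Matrix.trace ((Φs j * (Φs j)ᴴ) * (Φs j' * (Φs j')ᴴ))
      = f (j, j') := by
    intro j j'
    show _ = Matrix.trace (((Φs j)ᴴ * Φs j')ᴴ * ((Φs j)ᴴ * Φs j'))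
    rw [Matrix.conjTranspose_mul, Matrix.conjTranspose_conjTranspose,
      show Φs j * (Φs j)ᴴ * (Φs j' * (Φs j')ᴴ) = Φs j * (Φs j)ᴴ * Φs j' * (Φs j')ᴴ from by
        simp only [Matrix.mul_assoc],
      Matrix.trace_mul_cycle]
    congr 1
    simp only [Matrix.mul_assoc]
  have h2 : Matrix.trace ((Φ * Φᴴ) * (Φ * Φᴴ)) = ∑ p : Fin n × Fin n, f p := by
    rw [hsum, Finset.sum_mul_sum, Matrix.trace_sum]
    simp only [Matrix.trace_sum]
    rw [Fintype.sum_prod_type]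
    exact Finset.sum_congr rfl fun j _ => Finset.sum_congr rfl fun j' _ => hterm j j'
  -- split into off-diagonal and diagonal
  have hdiag : (∑ p ∈ Finset.univ.filter (fun p : Fin n × Fin n => ¬ p.1 ≠ p.2), f p)
      = (n : ℂ) * c := by
    have himg : Finset.univ.filter (fun p : Fin n × Fin n => ¬ p.1 ≠ p.2)
        = Finset.univ.image (fun j : Fin n => (j, j)) := by
      ext ⟨a, b⟩
      simp only [Finset.mem_filter, Finset.mem_univ, true_and, Finset.mem_image, not_not,
        Prod.mk.injEq]
      constructor
      · rintro rfl; exact ⟨a, rfl, rfl⟩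
      · rintro ⟨j, rfl, rfl⟩; rfl
    rw [himg, Finset.sum_image (by intro a _ b _ h; simpa using h)]
    have : ∀ j : Fin n, f (j, j) = (c : ℂ) := by
      intro j
      simp only [hf, hiso, Matrix.conjTranspose_one, Matrix.one_mul, Matrix.trace_one]
      simp
    simp only [this, Finset.sum_const, Finset.card_univ, Fintype.card_fin, nsmul_eq_mul]
  have hsplit : Matrix.trace ((Φ * Φᴴ) * (Φ * Φᴴ))
      = (∑ p ∈ Finset.univ.filter (fun p : Fin n × Fin n => p.1 ≠ p.2), f p)
        + (n : ℂ) * c := by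
    rw [h2, ← Finset.sum_filter_add_sum_filter_not Finset.univ
      (fun p : Fin n × Fin n => p.1 ≠ p.2) f, hdiag]
  have hTh : (Φ * Φᴴ)ᴴ = Φ * Φᴴ := by
    rw [Matrix.conjTranspose_mul, Matrix.conjTranspose_conjTranspose]
  set t : ℂ := ((n : ℂ) * c) / d with ht
  have hst : star t = t := by
    simp [ht, star_div₀, star_mul']
  have hexpand : Matrix.trace ((Φ * Φᴴ - t • 1)ᴴ * (Φ * Φᴴ - t • 1))
      = Matrix.trace ((Φ * Φᴴ) * (Φ * Φᴴ)) - t * Matrix.trace (Φ * Φᴴ)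
        - t * Matrix.trace (Φ * Φᴴ) + t * t * d := by
    rw [Matrix.conjTranspose_sub, Matrix.conjTranspose_smul, Matrix.conjTranspose_one, hTh, hst]
    rw [Matrix.sub_mul, Matrix.mul_sub, Matrix.mul_sub]
    simp only [Matrix.trace_sub, Matrix.smul_mul, Matrix.mul_smul, Matrix.trace_smul,
      smul_smul, Matrix.one_mul, Matrix.mul_one, Matrix.trace_one, smul_eq_mul,
      Fintype.card_fin]
    ring
  have hkey : Matrix.trace ((Φ * Φᴴ - t • 1)ᴴ * (Φ * Φᴴ - t • 1))
      = (∑ p ∈ Finset.univ.filter (fun p : Fin n × Fin n => p.1 ≠ p.2), f p)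
        + (((n : ℝ) * c - (n : ℝ) ^ 2 * c ^ 2 / d : ℝ) : ℂ) := by
    rw [hexpand, hsplit, h1, ht]
    push_cast
    field_simp
    ring
  have hre : (Matrix.trace ((Φ * Φᴴ - t • 1)ᴴ * (Φ * Φᴴ - t • 1))).re
      = (∑ p ∈ Finset.univ.filter (fun p : Fin n × Fin n => p.1 ≠ p.2), (f p).re)
        + (n : ℝ) * c - (n : ℝ) ^ 2 * c ^ 2 / d := by
    rw [hkey, Complex.add_re, Complex.ofReal_re, Complex.re_sum]
    ring
  refine ⟨hre, ?_, ?_⟩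
  · rw [← hre]; exact trace_AhA_nonneg _
  · constructor
    · intro h
      have h0 : (Matrix.trace ((Φ * Φᴴ - t • 1)ᴴ * (Φ * Φᴴ - t • 1))).re = 0 := by
        rw [hre]; linarith
      have := (trace_AhA_eq_zero_iff _).mp h0
      have := sub_eq_zero.mp this
      exact this
    · intro h
      have h0 : Φ * Φᴴ - t • 1 = 0 := by rw [h]; simp
      have := (trace_AhA_eq_zero_iff (Φ * Φᴴ - t • 1)).mpr h0
      rw [hre] at this
      linarith
end
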